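/- arXiv:1901.01947 — 2 statements merged into one kernel-verified Lean document; each statement's English description precedes it below -/
import Mathlib

section
/- Let X = (x_1,...,x_n) be positive integers such that the GCD matrix S(X) is TN_2 (all minors of size at most 2 are nonnegative). Then for all 1 ≤ i ≤ j ≤ k ≤ n, gcd(x_i,x_k) = gcd(gcd(x_i,x_j),x_k) and x_j * gcd(x_i,x_k) divides x_i * x_k. -/
/-- All minors of size at most 2 are nonnegative. -/
def TN2 {n : ℕ} (A : Matrix (Fin n) (Fin n) ℝ) : Prop :=
  ∀ (k : ℕ), k ≤ 2 → ∀ (r c : Fin k → Fin n), StrictMono r → StrictMono c →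
    0 ≤ (A.submatrix r c).det

lemma gcd_mul_gcd_dvd (a b c : ℕ) :
    Nat.gcd a b * Nat.gcd b c ∣ Nat.gcd a c * b := by
  have h := Nat.gcd_mul_lcm (Nat.gcd a b) (Nat.gcd b c)
  rw [← h]
  exact mul_dvd_mul
    (Nat.dvd_gcd ((Nat.gcd_dvd_left _ _).trans (Nat.gcd_dvd_left a b))
      ((Nat.gcd_dvd_right _ _).trans (Nat.gcd_dvd_right b c)))
    (Nat.lcm_dvd (Nat.gcd_dvd_right a b) (Nat.gcd_dvd_left b c))

lemma helper (a b c : ℕ) (ha : 0 < a) (hb : 0 < b) (hc : 0 < c)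
    (h : Nat.gcd a c * b ≤ Nat.gcd a b * Nat.gcd b c) :
    Nat.gcd a c = Nat.gcd (Nat.gcd a b) c ∧ b * Nat.gcd a c ∣ a * c := by
  have hdvd := gcd_mul_gcd_dvd a b c
  have hgpos : 0 < Nat.gcd a c * b := Nat.mul_pos (Nat.gcd_pos_of_pos_left c ha) hb
  have hle := Nat.le_of_dvd hgpos hdvd
  have heq : Nat.gcd a b * Nat.gcd b c = Nat.gcd a c * b := le_antisymm hle h
  -- from gcd*lcm = gcd(a,c)*b, lcm ∣ b, gcd(d1,d2) ∣ gcd(a,c), get gcd(d1,d2) = gcd(a,c)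
  set d1 := Nat.gcd a b with hd1
  set d2 := Nat.gcd b c with hd2
  have hglcm := Nat.gcd_mul_lcm d1 d2
  have hlcm_dvd : Nat.lcm d1 d2 ∣ b := Nat.lcm_dvd (Nat.gcd_dvd_right a b) (Nat.gcd_dvd_left b c)
  have hg_dvd : Nat.gcd d1 d2 ∣ Nat.gcd a c :=
    Nat.dvd_gcd ((Nat.gcd_dvd_left _ _).trans (Nat.gcd_dvd_left a b))
      ((Nat.gcd_dvd_right _ _).trans (Nat.gcd_dvd_right b c))
  obtain ⟨s, hs⟩ := hlcm_dvd
  have hlcm_pos : 0 < Nat.lcm d1 d2 :=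
    Nat.pos_of_ne_zero (Nat.lcm_ne_zero (Nat.gcd_pos_of_pos_left b ha).ne'
      (Nat.gcd_pos_of_pos_left c hb).ne')
  have key : Nat.gcd a c ∣ Nat.gcd d1 d2 := by
    have : Nat.gcd d1 d2 * Nat.lcm d1 d2 = Nat.gcd a c * (Nat.lcm d1 d2 * s) := by
      rw [hglcm, heq, hs]
    have h2 : Nat.gcd d1 d2 = Nat.gcd a c * s := by
      have := this
      rw [mul_comm (Nat.lcm d1 d2) s, ← mul_assoc] at this
      exact Nat.eq_of_mul_eq_mul_right hlcm_pos (by linarith [this])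
    exact ⟨s, h2⟩
  have hgeq : Nat.gcd d1 d2 = Nat.gcd a c := Nat.dvd_antisymm hg_dvd key
  constructor
  · -- gcd a c = gcd (gcd a b) c
    rw [← hgeq, hd1, hd2]
    rw [← Nat.gcd_assoc, Nat.gcd_comm (Nat.gcd a b) b]
    congr 1
    exact Nat.gcd_eq_right (Nat.gcd_dvd_right a b)
  · rw [mul_comm b (Nat.gcd a c), ← heq]
    exact mul_dvd_mul (Nat.gcd_dvd_left a b) (Nat.gcd_dvd_right b c)

lemma strictMono_pair {n : ℕ} {i j : Fin n} (h : i < j) : StrictMono ![i, j] := by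
  intro a b hab
  fin_cases a <;> fin_cases b <;> simp_all <;> omega

theorem gcd_matrix_TN2_consequences (n : ℕ) (x : Fin n → ℕ) (hx : ∀ i, 0 < x i)
    (S : Matrix (Fin n) (Fin n) ℝ)
    (hS : ∀ i j, S i j = (Nat.gcd (x i) (x j) : ℝ))
    (hTN2 : TN2 S) :
    ∀ i j k : Fin n, i ≤ j → j ≤ k →
      Nat.gcd (x i) (x k) = Nat.gcd (Nat.gcd (x i) (x j)) (x k) ∧
      x j * Nat.gcd (x i) (x k) ∣ x i * x k := by
  intro i j k hij hjk
  have key : Nat.gcd (x i) (x k) * x j ≤ Nat.gcd (x i) (x j) * Nat.gcd (x j) (x k) := by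
    rcases eq_or_lt_of_le hij with rfl | hij'
    · rw [Nat.gcd_self, mul_comm]
    · rcases eq_or_lt_of_le hjk with rfl | hjk'
      · rw [Nat.gcd_self]
      · have h2 := hTN2 2 le_rfl ![i, j] ![j, k] (strictMono_pair hij') (strictMono_pair hjk')
        rw [Matrix.det_fin_two] at h2
        simp only [Matrix.submatrix_apply, Matrix.cons_val_zero, Matrix.cons_val_one,
          Matrix.head_cons] at h2
        rw [hS, hS, hS, hS, Nat.gcd_self] at h2
        have : ((Nat.gcd (x i) (x k) : ℝ)) * (x j : ℝ) ≤
            (Nat.gcd (x i) (x j) : ℝ) * (Nat.gcd (x j) (x k) : ℝ) := by linarith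
        exact_mod_cast this
  exact helper (x i) (x j) (x k) (hx i) (hx j) (hx k) key
end

section
/- Let X = (x_1,...,x_n) with n ≥ 3 be positive integers. Then the GCD matrix S(X) is TN_2 (all minors of size at most 2 nonnegative) if and only if S(X) is totally nonnegative (all minors nonnegative). -/
/-- A real matrix is totally nonnegative if every square minor is nonnegative. -/
def TotallyNonneg {n : ℕ} (A : Matrix (Fin n) (Fin n) ℝ) : Prop :=
  ∀ (k : ℕ) (r c : Fin k → Fin n), StrictMono r → StrictMono c →
    0 ≤ (A.submatrix r c).det

/-!
For `i < j < N`, with `N` the last index, the `2 × 2` minor of `S` on rows `i, j` and columns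
`j, N` is `gcd(xᵢ, xⱼ) gcd(xⱼ, x_N) - gcd(xᵢ, x_N) xⱼ`, which is never positive because
`gcd(a, b) gcd(a, c) ∣ a gcd(b, c)`. So `TN₂` forces it to vanish, and then
`S i j = gᵢ gⱼ h_{min(i, j)}` with `gᵢ = xᵢ / gcd(xᵢ, x_N)` and `hᵢ = gcd(xᵢ, x_N)² / xᵢ`
nondecreasing. Up to the positive diagonal scaling by `g`, every minor of such a matrix is a
determinant `det (h (min (rₐ, c_b)))`. If `c₀ ≤ r₀` (otherwise transpose) its first column is
constant, and subtracting the first row from the others leaves `h c₀` times a determinant of the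
same kind for the nondecreasing, nonnegative `u ↦ h (max u r₀) - h r₀`; induct on the size.
-/

open Matrix

theorem Nat.gcd_mul_gcd_dvd_mul_gcd (a b c : ℕ) : a.gcd b * a.gcd c ∣ a * b.gcd c := by
  rw [← Nat.gcd_mul_left a b c]
  refine Nat.dvd_gcd ?_ (mul_dvd_mul (Nat.gcd_dvd_left a b) (Nat.gcd_dvd_right a c))
  simpa only [mul_comm b a] using mul_dvd_mul (Nat.gcd_dvd_right a b) (Nat.gcd_dvd_left a c)

theorem det_min_kernel_succ {ι : Type*} [LinearOrder ι] (h : ι → ℝ) {k : ℕ}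
    {r c : Fin (k + 1) → ι} (hr : Monotone r) (hc0 : c 0 ≤ r 0) :
    (of fun a b => h (min (r a) (c b))).det =
      h (c 0) * (of fun a b : Fin k =>
        h (max (min (r a.succ) (c b.succ)) (r 0)) - h (r 0)).det := by
  set h' : ι → ℝ := fun u => h (max u (r 0)) - h (r 0)
  let B : Matrix (Fin (k + 1)) (Fin (k + 1)) ℝ :=
    Fin.cons (fun b => h (min (r 0) (c b))) fun a b => h' (min (r a.succ) (c b))
  have hB : (of fun a b => h (min (r a) (c b))).det = B.det := by
    refine det_eq_of_forall_row_eq_smul_add_const (Fin.cons 0 1) 0 rfl fun a b => ?_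
    cases a using Fin.cases with
    | zero => simp [B]
    | succ a =>
      have hr0 := hr (Fin.zero_le a.succ)
      simp only [B, h', of_apply, Fin.cons_succ, Fin.cons_zero, Pi.one_apply, one_mul]
      rcases le_total (r a.succ) (c b) with hab | hab
      · simp [min_eq_left hab, max_eq_left hr0, min_eq_left (hr0.trans hab)]
      · rcases le_total (r 0) (c b) with h0b | h0b
        · simp [min_eq_right hab, max_eq_left h0b, min_eq_left h0b]
        · simp [min_eq_right hab, max_eq_right h0b, min_eq_right h0b]
  rw [hB, det_succ_column_zero, Fin.sum_univ_succ, Finset.sum_eq_zero, add_zero]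
  · simp only [Fin.val_zero, pow_zero, one_mul, Fin.succAbove_zero]
    congr 1
    simp [B, min_eq_right hc0]
  · intro a _
    simp [B, h', max_eq_right ((min_le_right _ _).trans hc0)]

theorem det_min_kernel_nonneg {ι : Type*} [LinearOrder ι] {k : ℕ} {h : ι → ℝ}
    (hmono : Monotone h) (hnonneg : 0 ≤ h) {r c : Fin k → ι} (hr : Monotone r)
    (hc : Monotone c) : 0 ≤ (of fun a b => h (min (r a) (c b))).det := by
  induction k generalizing h with
  | zero => simp
  | succ k ih =>
    wlog hc0 : c 0 ≤ r 0 generalizing r c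
    · rw [← det_transpose]
      simpa only [transpose, of_apply, min_comm] using this hc hr (le_of_not_ge hc0)
    rw [det_min_kernel_succ h hr hc0]
    exact mul_nonneg (hnonneg _) <| ih (h := fun u => h (max u (r 0)) - h (r 0))
      (fun u v huv => sub_le_sub_right (hmono (max_le_max_right _ huv)) _)
      (fun u => sub_nonneg.2 (hmono (le_max_right _ _)))
      (hr.comp (Fin.strictMono_succ.monotone)) (hc.comp (Fin.strictMono_succ.monotone))

/-- A Green's matrix `a_{min(i,j)} b_{max(i,j)}` with `a / b` nondecreasing, written with `b = g`
and `a = g h`. -/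
def IsGreenMatrix {n : ℕ} (S : Matrix (Fin n) (Fin n) ℝ) : Prop :=
  ∃ g h : Fin n → ℝ, 0 ≤ g ∧ Monotone h ∧ 0 ≤ h ∧ ∀ i j, S i j = g i * g j * h (min i j)

theorem IsGreenMatrix.totallyNonneg {n : ℕ} {S : Matrix (Fin n) (Fin n) ℝ}
    (hS : IsGreenMatrix S) : TotallyNonneg S := by
  obtain ⟨g, h, hg, hmono, hh, hS⟩ := hS
  intro k r c hr hc
  have hdet : (S.submatrix r c).det = (∏ a, g (r a)) * ((∏ b, g (c b)) *
      (of fun a b => h (min (r a) (c b))).det) := by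
    rw [← det_mul_row, ← det_mul_column]
    congr 1
    ext a b
    simp [hS, mul_assoc]
  rw [hdet]
  exact mul_nonneg (Finset.prod_nonneg fun a _ => hg (r a)) <| mul_nonneg
    (Finset.prod_nonneg fun b _ => hg (c b)) (det_min_kernel_nonneg hmono hh hr.monotone hc.monotone)

def gcdMatrix {n : ℕ} (x : Fin n → ℕ) : Matrix (Fin n) (Fin n) ℝ :=
  of fun i j => ((x i).gcd (x j) : ℝ)

section GcdMatrix

variable {m : ℕ} {x : Fin (m + 1) → ℕ}

theorem TN2.gcd_mul_gcd_last (h2 : TN2 (gcdMatrix x)) (hx : ∀ i, 0 < x i)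
    {i j : Fin (m + 1)} (hij : i ≤ j) :
    (x i).gcd (x j) * (x j).gcd (x (Fin.last m)) = (x i).gcd (x (Fin.last m)) * x j := by
  rcases hij.eq_or_lt with rfl | hij
  · rw [Nat.gcd_self, mul_comm]
  rcases (Fin.le_last j).eq_or_lt with rfl | hjN
  · rw [Nat.gcd_self]
  refine le_antisymm (Nat.le_of_dvd (Nat.mul_pos (Nat.gcd_pos_of_pos_left _ (hx i)) (hx j)) ?_) ?_
  · simpa only [Nat.gcd_comm (x j) (x i), mul_comm (x j)] using
      Nat.gcd_mul_gcd_dvd_mul_gcd (x j) (x i) (x (Fin.last m))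
  · have hminor := h2 2 le_rfl ![i, j] ![j, Fin.last m] (by simpa using hij) (by simpa using hjN)
    rw [det_fin_two, sub_nonneg] at hminor
    simp only [gcdMatrix, submatrix_apply, of_apply, Matrix.cons_val_zero, Matrix.cons_val_one,
      Nat.gcd_self] at hminor
    exact_mod_cast hminor

theorem TN2.isGreenMatrix_gcdMatrix (h2 : TN2 (gcdMatrix x)) (hx : ∀ i, 0 < x i) :
    IsGreenMatrix (gcdMatrix x) := by
  set G : Fin (m + 1) → ℕ := fun i => (x i).gcd (x (Fin.last m))
  have hG0 : ∀ i, (0 : ℝ) < G i := fun i => by exact_mod_cast Nat.gcd_pos_of_pos_left _ (hx i)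
  have hx0 : ∀ i, (0 : ℝ) < x i := fun i => by exact_mod_cast hx i
  refine ⟨fun i => x i / G i, fun i => G i ^ 2 / x i, fun i => (div_pos (hx0 i) (hG0 i)).le,
    fun i j hij => ?_, fun i => (div_pos (pow_pos (hG0 i) 2) (hx0 i)).le, fun i j => ?_⟩
  · have hdvd : (x i).gcd (x j) * G i ≤ x i * G j :=
      Nat.le_of_dvd (Nat.mul_pos (hx i) (Nat.gcd_pos_of_pos_left _ (hx j)))
        (Nat.gcd_mul_gcd_dvd_mul_gcd _ _ _)
    have key := h2.gcd_mul_gcd_last hx hij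
    rw [div_le_div_iff₀ (hx0 i) (hx0 j)]
    have : G i ^ 2 * x j ≤ G j ^ 2 * x i :=
      calc G i ^ 2 * x j = (x i).gcd (x j) * G i * G j := by rw [sq, mul_assoc, ← key]; ring
        _ ≤ x i * G j * G j := Nat.mul_le_mul_right _ hdvd
        _ = G j ^ 2 * x i := by ring
    exact_mod_cast this
  · wlog hij : i ≤ j generalizing i j
    · simpa only [gcdMatrix, of_apply, Nat.gcd_comm, mul_comm, min_comm] using
        this j i (le_of_not_ge hij)
    have key : ((x i).gcd (x j) : ℝ) * G j = G i * x j := by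
      exact_mod_cast h2.gcd_mul_gcd_last hx hij
    simp only [gcdMatrix, of_apply, min_eq_left hij]
    have := (hx0 i).ne'
    have := (hG0 i).ne'
    have := (hG0 j).ne'
    field_simp
    linear_combination key

end GcdMatrix

theorem gcd_matrix_TN2_iff_TN_general (n : ℕ) (x : Fin n → ℕ) (hx : ∀ i, 0 < x i)
    (S : Matrix (Fin n) (Fin n) ℝ)
    (hS : ∀ i j, S i j = (Nat.gcd (x i) (x j) : ℝ)) :
    TN2 S ↔ TotallyNonneg S := by
  obtain rfl : S = gcdMatrix x := Matrix.ext hS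
  refine ⟨fun h2 => ?_, fun hTN k _ => hTN k⟩
  cases n with
  | zero =>
    exact IsGreenMatrix.totallyNonneg ⟨0, 0, le_rfl, monotone_const, le_rfl, fun i => i.elim0⟩
  | succ m => exact (h2.isGreenMatrix_gcdMatrix hx).totallyNonneg

theorem gcd_matrix_TN2_iff_TN (n : ℕ) (hn : 3 ≤ n) (x : Fin n → ℕ) (hx : ∀ i, 0 < x i)
    (S : Matrix (Fin n) (Fin n) ℝ)
    (hS : ∀ i j, S i j = (Nat.gcd (x i) (x j) : ℝ)) :
    TN2 S ↔ TotallyNonneg S :=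
  gcd_matrix_TN2_iff_TN_general n x hx S hS
end
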